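/- arXiv:quant-ph/0005032 — 3 statements merged into one kernel-verified Lean document; each statement's English description precedes it below -/
import Mathlib

section
/- Let C be a finite type, S a finite set of functions from C to Bool, and h a real number with 0 < h < 1. Assume the following balancedness property: for every finite set D ⊆ C and every σ : C → Bool, if the set T = {s ∈ S : ∀ c ∈ D, s(c) = σ(c)} has at least 2 elements, then there exists a column c ∈ C such that |{s ∈ T : s(c) = true}| ≤ h·|T| and |{s ∈ T : s(c) = false}| ≤ h·|T|. Then for every r ∈ S there exists a finite set D ⊆ C with |D| ≤ ⌈log_{1/h}(|S|)⌉ such that r is the unique element of S satisfying s(c) = r(c) for all c ∈ D. -/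
/-- **Row identification by balanced column queries.**
If every subset of the rows `S` (obtained by fixing values on some columns)
that has at least 2 elements admits a column on which both values occur on at
most an `h`-fraction of these rows, then every row `r ∈ S` is uniquely
determined by its values on some set `D` of at most `⌈log_{1/h} |S|⌉`
columns. -/
theorem row_identification {C : Type*} [Fintype C] [DecidableEq C]
    (S : Finset (C → Bool)) (h : ℝ) (h0 : 0 < h) (h1 : h < 1)
    (hbal : ∀ (D : Finset C) (σ : C → Bool),
      2 ≤ (S.filter (fun s => ∀ c ∈ D, s c = σ c)).card →
      ∃ c : C,
        (((S.filter (fun s => ∀ c' ∈ D, s c' = σ c')).filter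
            (fun s => s c = true)).card : ℝ) ≤
          h * (S.filter (fun s => ∀ c' ∈ D, s c' = σ c')).card ∧
        (((S.filter (fun s => ∀ c' ∈ D, s c' = σ c')).filter
            (fun s => s c = false)).card : ℝ) ≤
          h * (S.filter (fun s => ∀ c' ∈ D, s c' = σ c')).card) :
    ∀ r ∈ S, ∃ D : Finset C,
      D.card ≤ ⌈Real.logb (1 / h) (S.card : ℝ)⌉₊ ∧
      S.filter (fun s => ∀ c ∈ D, s c = r c) = {r} := by
  intro r hr
  set T : Finset C → Finset (C → Bool) :=
    fun D => S.filter (fun s => ∀ c ∈ D, s c = r c) with hT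
  have hrT : ∀ D, r ∈ T D := fun D => Finset.mem_filter.2 ⟨hr, fun c _ => rfl⟩
  have key : ∀ k : ℕ, ∃ D : Finset C, D.card ≤ k ∧
      (((T D).card : ℝ) ≤ h ^ k * S.card ∨ T D = {r}) := by
    intro k
    induction k with
    | zero =>
      refine ⟨∅, le_refl _, Or.inl ?_⟩
      simp only [pow_zero, one_mul]
      exact_mod_cast Finset.card_filter_le _ _
    | succ k ih =>
      obtain ⟨D, hDc, hD⟩ := ih
      rcases hD with hle | heq
      · by_cases hsing : T D = {r}
        · exact ⟨D, hDc.trans (Nat.le_succ k), Or.inr hsing⟩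
        · have h2 : 2 ≤ (T D).card := by
            by_contra hcon
            push_neg at hcon
            have hc1 : (T D).card = 1 :=
              le_antisymm (Nat.lt_succ_iff.1 hcon)
                (Finset.card_pos.2 ⟨r, hrT D⟩)
            obtain ⟨a, ha⟩ := Finset.card_eq_one.1 hc1
            apply hsing
            have : r = a := by
              have := hrT D
              rw [ha, Finset.mem_singleton] at this
              exact this
            rw [ha, this]
          obtain ⟨c, hct, hcf⟩ := hbal D r h2
          have hTins : T (insert c D) = (T D).filter (fun s => s c = r c) := by
            ext s
            simp only [hT, Finset.mem_filter, Finset.forall_mem_insert]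
            tauto
          have hstep : ((T (insert c D)).card : ℝ) ≤ h * (T D).card := by
            rw [hTins]
            cases hb : r c with
            | false => simpa [hb] using hcf
            | true => simpa [hb] using hct
          refine ⟨insert c D, ?_, Or.inl ?_⟩
          · exact (Finset.card_insert_le _ _).trans (Nat.succ_le_succ hDc)
          · calc ((T (insert c D)).card : ℝ) ≤ h * (T D).card := hstep
              _ ≤ h * (h ^ k * S.card) := by
                  exact mul_le_mul_of_nonneg_left hle h0.le
              _ = h ^ (k + 1) * S.card := by ring
      · exact ⟨D, hDc.trans (Nat.le_succ k), Or.inr heq⟩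
  set K : ℕ := ⌈Real.logb (1 / h) (S.card : ℝ)⌉₊ with hK
  obtain ⟨D, hDc, hD⟩ := key K
  refine ⟨D, hDc, ?_⟩
  rcases hD with hle | heq
  · -- show h^K * S.card ≤ 1, hence T D = {r}
    have hScard : (0 : ℝ) < S.card := by
      exact_mod_cast Finset.card_pos.2 ⟨r, hr⟩
    have hb1 : 1 < 1 / h := one_lt_one_div h0 h1
    have hlogle : Real.logb (1 / h) (S.card : ℝ) ≤ (K : ℝ) := Nat.le_ceil _
    have hpow : (S.card : ℝ) ≤ (1 / h) ^ K := by
      have h1' : (S.card : ℝ) = (1 / h) ^ Real.logb (1 / h) (S.card : ℝ) :=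
        (Real.rpow_logb (by positivity) (ne_of_gt hb1) hScard).symm
      calc (S.card : ℝ) = (1 / h) ^ Real.logb (1 / h) (S.card : ℝ) := h1'
        _ ≤ (1 / h) ^ (K : ℝ) :=
            Real.rpow_le_rpow_of_exponent_le hb1.le hlogle
        _ = (1 / h) ^ K := Real.rpow_natCast _ _
    have hpowK : (0 : ℝ) < h ^ K := pow_pos h0 K
    have hle1 : h ^ K * (S.card : ℝ) ≤ 1 := by
      have : (1 / h) ^ K = 1 / h ^ K := by
        rw [one_div, one_div, inv_pow]
      rw [this] at hpow
      calc h ^ K * (S.card : ℝ) ≤ h ^ K * (1 / h ^ K) :=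
            mul_le_mul_of_nonneg_left hpow hpowK.le
        _ = 1 := by field_simp
    have hcard1 : (T D).card ≤ 1 := by
      have : ((T D).card : ℝ) ≤ 1 := hle.trans hle1
      exact_mod_cast this
    have hcard : (T D).card = 1 :=
      le_antisymm hcard1 (Finset.card_pos.2 ⟨r, hrT D⟩)
    obtain ⟨a, ha⟩ := Finset.card_eq_one.1 hcard
    have hra : r = a := by
      have := hrT D
      rw [ha, Finset.mem_singleton] at this
      exact this
    show T D = {r}
    rw [ha, hra]
  · exact heq
end

section
/- Fix N ≥ 1 and consider, for x ∈ Fin N, the row function y ↦ decide(y ≤ x) on Fin N. For every finite set D ⊆ Fin N and every σ : Fin N → Bool, let T = {x ∈ Fin N : ∀ y ∈ D, decide(y ≤ x) = σ(y)}. If |T| ≥ 2, then there exists c ∈ Fin N such that |{x ∈ T : c ≤ x}| ≤ (2/3)·|T| and |{x ∈ T : x < c}| ≤ (2/3)·|T|. -/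
lemma card_filter_lt_orderEmbOfFin {α : Type*} [LinearOrder α] [DecidableEq α]
    (T : Finset α) {m : ℕ} (h : T.card = m) (i : Fin m) :
    (T.filter (fun x => x < T.orderEmbOfFin h i)).card = i := by
  classical
  have hmono := (T.orderEmbOfFin h).strictMono
  have : T.filter (fun x => x < T.orderEmbOfFin h i)
      = (Finset.Iio i).image (T.orderEmbOfFin h) := by
    ext x
    simp only [Finset.mem_filter, Finset.mem_image, Finset.mem_Iio]
    constructor
    · rintro ⟨hx, hlt⟩
      obtain ⟨j, rfl⟩ : ∃ j, T.orderEmbOfFin h j = x := by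
        have := Finset.range_orderEmbOfFin T h
        have hx' : x ∈ Set.range (T.orderEmbOfFin h) := this ▸ hx
        exact hx'
      exact ⟨j, hmono.lt_iff_lt.mp hlt, rfl⟩
    · rintro ⟨j, hj, rfl⟩
      exact ⟨Finset.orderEmbOfFin_mem T h j, hmono hj⟩
  rw [this, Finset.card_image_of_injective _ (T.orderEmbOfFin h).injective,
    Fin.card_Iio]


/-- **Balancedness `h = 2/3` for the GT matrix.**
For the Greater-Than matrix (rows `x ∈ Fin N`, columns `y`, entry
`decide (y ≤ x)`), any set of rows obtained by fixing the values on some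
columns, if it has at least two elements, admits a column `c` such that each
of the two answers keeps at most a `2/3`-fraction of the rows. -/
theorem gt_matrix_balanced (N : ℕ) (hN : 1 ≤ N)
    (D : Finset (Fin N)) (σ : Fin N → Bool) :
    2 ≤ ((Finset.univ : Finset (Fin N)).filter
        (fun x => ∀ y ∈ D, decide (y ≤ x) = σ y)).card →
    ∃ c : Fin N,
      ((((Finset.univ : Finset (Fin N)).filter
          (fun x => ∀ y ∈ D, decide (y ≤ x) = σ y)).filter
            (fun x => c ≤ x)).card : ℝ) ≤
        2 / 3 * ((Finset.univ : Finset (Fin N)).filter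
          (fun x => ∀ y ∈ D, decide (y ≤ x) = σ y)).card ∧
      ((((Finset.univ : Finset (Fin N)).filter
          (fun x => ∀ y ∈ D, decide (y ≤ x) = σ y)).filter
            (fun x => x < c)).card : ℝ) ≤
        2 / 3 * ((Finset.univ : Finset (Fin N)).filter
          (fun x => ∀ y ∈ D, decide (y ≤ x) = σ y)).card := by
  classical
  intro h2
  set T := (Finset.univ : Finset (Fin N)).filter
      (fun x => ∀ y ∈ D, decide (y ≤ x) = σ y) with hT
  set m := T.card with hm
  have hm2 : 2 ≤ m := h2
  have hk : m / 2 < m := Nat.div_lt_self (by omega) (by norm_num)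
  set c := T.orderEmbOfFin rfl ⟨m / 2, hk⟩ with hc
  refine ⟨c, ?_, ?_⟩
  · have hsplit : (T.filter (fun x => c ≤ x)).card + (T.filter (fun x => x < c)).card = m := by
      have := Finset.card_filter_add_card_filter_not (s := T) (p := fun x => c ≤ x)
      simpa [not_le] using this
    have hlt : (T.filter (fun x => x < c)).card = m / 2 :=
      card_filter_lt_orderEmbOfFin T rfl ⟨m / 2, hk⟩
    have : 3 * (T.filter (fun x => c ≤ x)).card ≤ 2 * m := by omega
    have := Nat.cast_le (α := ℝ).mpr this
    push_cast at this
    linarith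
  · have hlt : (T.filter (fun x => x < c)).card = m / 2 :=
      card_filter_lt_orderEmbOfFin T rfl ⟨m / 2, hk⟩
    have : 3 * (T.filter (fun x => x < c)).card ≤ 2 * m := by omega
    have := Nat.cast_le (α := ℝ).mpr this
    push_cast at this
    linarith
end

section
/- Let X and Y be types, f : X × Y → Bool, and let Y₀ be a finite subset of Y of cardinality d that is shattered by f, i.e., for every R ⊆ Y₀ there exists x ∈ X with (f(x,y) = true ⟺ y ∈ R) for all y ∈ Y₀. Then there exists a finite set S ⊆ X with |S| = 2^d such that: (a) the restrictions y ↦ f(x,y) to Y₀ are pairwise distinct for x ∈ S, and (b) for every D ⊆ Y₀ and every σ : Y → Bool, the set T = {x ∈ S : ∀ y ∈ D, f(x,y) = σ(y)}, whenever |T| ≥ 2, admits a column c ∈ Y₀ \ D with |{x ∈ T : f(x,c) = true}| = |{x ∈ T : f(x,c) = false}| = |T| / 2. -/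
/-!
Choosing for every `R ⊆ Y₀` a row realizing `R` gives `2 ^ d` rows forming a copy of the Boolean
cube on `Y₀`. Fixing the values on `D ⊆ Y₀` cuts out a subcube; if it has two points they differ
in some free column `c ∈ Y₀ \ D`, and toggling `c` is a bijection between the two halves of the
subcube cut by `c`.
-/

open Finset

namespace Finset

variable {α : Type*} [DecidableEq α]

theorem card_filter_mem_eq_card_filter_notMem {𝒜 : Finset (Finset α)} {a : α}
    (herase : ∀ s ∈ 𝒜, s.erase a ∈ 𝒜) (hinsert : ∀ s ∈ 𝒜, insert a s ∈ 𝒜) :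
    #(𝒜.filter (a ∈ ·)) = #(𝒜.filter (a ∉ ·)) := by
  refine card_nbij' (·.erase a) (insert a) ?_ ?_ ?_ ?_
  · intro s hs
    simp only [coe_filter, Set.mem_ofPred_eq] at hs ⊢
    exact ⟨herase s hs.1, notMem_erase a s⟩
  · intro s hs
    simp only [coe_filter, Set.mem_ofPred_eq] at hs ⊢
    exact ⟨hinsert s hs.1, mem_insert_self a s⟩
  · intro s hs
    exact insert_erase (mem_filter.1 hs).2
  · intro s hs
    exact erase_insert (mem_filter.1 hs).2

def subcube (s t : Finset α) (σ : α → Bool) : Finset (Finset α) :=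
  s.powerset.filter fun R => ∀ y ∈ t, (y ∈ R ↔ σ y = true)

variable {s t R : Finset α} {σ : α → Bool} {c : α}

theorem mem_subcube :
    R ∈ subcube s t σ ↔ R ⊆ s ∧ ∀ y ∈ t, (y ∈ R ↔ σ y = true) := by
  rw [subcube, mem_filter, mem_powerset]

theorem erase_mem_subcube (hR : R ∈ subcube s t σ) (hc : c ∉ t) :
    R.erase c ∈ subcube s t σ := by
  rw [mem_subcube] at hR ⊢
  refine ⟨(erase_subset c R).trans hR.1, fun y hy => ?_⟩
  rw [mem_erase, ← hR.2 y hy, and_iff_right_iff_imp]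
  exact fun _ hyc => hc (hyc ▸ hy)

theorem insert_mem_subcube (hR : R ∈ subcube s t σ) (hc : c ∈ s \ t) :
    insert c R ∈ subcube s t σ := by
  rw [mem_sdiff] at hc
  rw [mem_subcube] at hR ⊢
  refine ⟨insert_subset hc.1 hR.1, fun y hy => ?_⟩
  rw [mem_insert, ← hR.2 y hy, or_iff_right_iff_imp]
  exact fun hyc => absurd (hyc ▸ hy) hc.2

theorem nonempty_sdiff_of_one_lt_card_subcube (h : 1 < #(subcube s t σ)) :
    (s \ t).Nonempty := by
  obtain ⟨R₁, hR₁, R₂, hR₂, hne⟩ := one_lt_card.1 h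
  obtain ⟨c, hc⟩ : ∃ c, ¬(c ∈ R₁ ↔ c ∈ R₂) := not_forall.1 fun h => hne (ext h)
  rw [mem_subcube] at hR₁ hR₂
  refine ⟨c, mem_sdiff.2 ⟨?_, fun hct => hc ((hR₁.2 c hct).trans (hR₂.2 c hct).symm)⟩⟩
  by_cases hc₁ : c ∈ R₁
  · exact hR₁.1 hc₁
  · exact hR₂.1 ((not_iff.1 hc).1 hc₁)

theorem card_filter_mem_subcube (hc : c ∈ s \ t) :
    #((subcube s t σ).filter (c ∈ ·)) = #(subcube s t σ) / 2 ∧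
      #((subcube s t σ).filter (c ∉ ·)) = #(subcube s t σ) / 2 := by
  have heq := card_filter_mem_eq_card_filter_notMem (𝒜 := subcube s t σ)
    (fun R hR => erase_mem_subcube hR (mem_sdiff.1 hc).2) (fun R hR => insert_mem_subcube hR hc)
  have hsum := card_filter_add_card_filter_not (s := subcube s t σ) (p := (c ∈ ·))
  omega

end Finset

section Rows

variable {X Y : Type*} [DecidableEq Y] {f : X × Y → Bool} {Y₀ : Finset Y}

theorem exists_realizer_of_shatters
    (hshat : ∀ R ⊆ Y₀, ∃ x : X, ∀ y ∈ Y₀, (f (x, y) = true ↔ y ∈ R)) :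
    ∃ g : Finset Y → X, ∀ R ⊆ Y₀, ∀ y ∈ Y₀, (f (g R, y) = true ↔ y ∈ R) := by
  choose g hg using hshat
  refine ⟨fun R => g (R ∩ Y₀) inter_subset_right, fun R hR y hy => ?_⟩
  rw [hg _ _ y hy, inter_eq_left.2 hR]

variable {g : Finset Y → X} (hg : ∀ R ⊆ Y₀, ∀ y ∈ Y₀, (f (g R, y) = true ↔ y ∈ R))
include hg

theorem eq_of_forall_realizer_apply_eq {R₁ R₂ : Finset Y} (hR₁ : R₁ ⊆ Y₀) (hR₂ : R₂ ⊆ Y₀)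
    (h : ∀ y ∈ Y₀, f (g R₁, y) = f (g R₂, y)) : R₁ = R₂ := by
  ext y
  by_cases hy : y ∈ Y₀
  · rw [← hg R₁ hR₁ y hy, ← hg R₂ hR₂ y hy, h y hy]
  · exact iff_of_false (fun h => hy (hR₁ h)) (fun h => hy (hR₂ h))

theorem injOn_realizer : Set.InjOn g Y₀.powerset := fun _ hR₁ _ hR₂ h =>
  eq_of_forall_realizer_apply_eq hg (mem_powerset.1 hR₁) (mem_powerset.1 hR₂) fun _ _ => h ▸ rfl

theorem card_filter_image_realizer [DecidableEq X] {p : X → Prop} [DecidablePred p]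
    {q : Finset Y → Prop} [DecidablePred q] (hpq : ∀ R ⊆ Y₀, p (g R) ↔ q R) :
    #((Y₀.powerset.image g).filter p) = #(Y₀.powerset.filter q) := by
  rw [filter_image, card_image_of_injOn ((injOn_realizer hg).mono (filter_subset _ _))]
  exact congrArg card (filter_congr fun R hR => hpq R (mem_powerset.1 hR))

end Rows

/-- **A shattered set of size `d` yields `2^d` rows with balancedness `1/2`.**
If `Y₀` (of size `d`) is shattered by `f`, then there are `2^d` rows of the
communication matrix of `f` that are pairwise distinct on `Y₀`, and every
subset of these rows obtained by fixing values on columns `D ⊆ Y₀`, if it has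
at least two elements, is split exactly in half by some column in `Y₀ \ D`. -/
theorem shattered_set_gives_balanced_rows {X Y : Type*} [DecidableEq Y]
    (f : X × Y → Bool) (Y₀ : Finset Y) (d : ℕ) (hcard : Y₀.card = d)
    (hshat : ∀ R ⊆ Y₀, ∃ x : X, ∀ y ∈ Y₀, (f (x, y) = true ↔ y ∈ R)) :
    ∃ S : Finset X, S.card = 2 ^ d ∧
      (∀ x₁ ∈ S, ∀ x₂ ∈ S, (∀ y ∈ Y₀, f (x₁, y) = f (x₂, y)) → x₁ = x₂) ∧
      ∀ D ⊆ Y₀, ∀ σ : Y → Bool,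
        2 ≤ (S.filter (fun x => ∀ y ∈ D, f (x, y) = σ y)).card →
        ∃ c ∈ Y₀ \ D,
          ((S.filter (fun x => ∀ y ∈ D, f (x, y) = σ y)).filter
              (fun x => f (x, c) = true)).card =
            (S.filter (fun x => ∀ y ∈ D, f (x, y) = σ y)).card / 2 ∧
          ((S.filter (fun x => ∀ y ∈ D, f (x, y) = σ y)).filter
              (fun x => f (x, c) = false)).card =
            (S.filter (fun x => ∀ y ∈ D, f (x, y) = σ y)).card / 2 := by
  classical
  obtain ⟨g, hg⟩ := exists_realizer_of_shatters hshat
  refine ⟨Y₀.powerset.image g, ?_, ?_, fun D hD σ hT => ?_⟩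
  · rw [card_image_of_injOn (injOn_realizer hg), card_powerset, hcard]
  · simp only [mem_image, mem_powerset]
    rintro _ ⟨R₁, hR₁, rfl⟩ _ ⟨R₂, hR₂, rfl⟩ h
    rw [eq_of_forall_realizer_apply_eq hg hR₁ hR₂ h]
  have hcube : ∀ R ⊆ Y₀, (∀ y ∈ D, f (g R, y) = σ y) ↔ ∀ y ∈ D, (y ∈ R ↔ σ y = true) :=
    fun R hR => forall₂_congr fun y hy => by rw [Bool.eq_iff_iff, hg R hR y (hD hy)]
  rw [card_filter_image_realizer hg hcube, ← subcube] at hT ⊢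
  obtain ⟨c, hc⟩ := nonempty_sdiff_of_one_lt_card_subcube hT
  have hcY₀ := (mem_sdiff.1 hc).1
  obtain ⟨hin, hout⟩ := card_filter_mem_subcube (σ := σ) hc
  refine ⟨c, hc, ?_, ?_⟩
  · rw [filter_filter, card_filter_image_realizer hg
      (fun R hR => and_congr (hcube R hR) (hg R hR c hcY₀)), ← hin, subcube, filter_filter]
  · rw [filter_filter, card_filter_image_realizer hg
      (fun R hR => and_congr (hcube R hR) (by rw [← Bool.not_eq_true, hg R hR c hcY₀])),
      ← hout, subcube, filter_filter]
end
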